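/- Let G = (V, E_1, …, E_N) be an infinite, locally finite, connected, quasi-transitive edge-coloured graph with N colours. Then the set 𝒜^c := {p ∈ [0,1]^{N−1} : λ ↦ q_ψ(p + λ1) is not left-continuous at λ = 0} has Lebesgue measure zero in [0,1]^{N−1}. -/

import Mathlib

open MeasureTheory ENNReal Set
open scoped Classical

namespace InhomPerc

variable {V : Type*} {N : ℕ}

/-- The edge set of an edge-coloured graph: the union of all colour classes. -/
def Eset (E : Fin N → Set (Sym2 V)) : Set (Sym2 V) := ⋃ i, E i

/-- The colour classes are mutually disjoint. -/
def DisjointColours (E : Fin N → Set (Sym2 V)) : Prop :=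
  ∀ i j : Fin N, i ≠ j → Disjoint (E i) (E j)

/-- Every edge is a pair of two *distinct* vertices. -/
def NoLoops (E : Fin N → Set (Sym2 V)) : Prop := ∀ e ∈ Eset E, ¬ e.IsDiag

/-- The underlying simple graph of the edge-coloured graph. -/
def graph (E : Fin N → Set (Sym2 V)) : SimpleGraph V where
  Adj u v := u ≠ v ∧ s(u, v) ∈ Eset E
  symm := by
    constructor
    intro u v h
    refine ⟨h.1.symm, ?_⟩
    rw [Sym2.eq_swap]
    exact h.2
  loopless := ⟨fun v h => h.1 rfl⟩

/-- Local finiteness: every vertex lies in finitely many edges. -/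
def LocFin (E : Fin N → Set (Sym2 V)) : Prop :=
  ∀ v : V, {e ∈ Eset E | v ∈ e}.Finite

/-- Connectivity of the edge-coloured graph. -/
def ConnectedGraph (E : Fin N → Set (Sym2 V)) : Prop := (graph E).Connected

/-- Quasi-transitivity: the vertices can be partitioned into finitely many classes
such that vertices in the same class are related by a coloured graph automorphism. -/
def QuasiTransitive (E : Fin N → Set (Sym2 V)) : Prop :=
  ∃ (k : ℕ) (c : V → Fin k), ∀ u v : V, c u = c v →
    ∃ f : V ≃ V, (∀ (i : Fin N) (e : Sym2 V), e ∈ E i ↔ e.map f ∈ E i) ∧ f v = u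

/-- Graph distance. -/
noncomputable def dist (E : Fin N → Set (Sym2 V)) (u v : V) : ℕ := (graph E).dist u v

/-- Percolation configurations: each (potential) edge is open (`true`) or closed. -/
abbrev Config (V : Type*) := Sym2 V → Bool

/-- `x` is joined to `y` by a path of open edges all of whose endpoints lie in `S`. -/
def ConnIn (E : Fin N → Set (Sym2 V)) (ω : Config V) (S : Set V) (x y : V) : Prop :=
  Relation.ReflTransGen
    (fun a b => a ∈ S ∧ b ∈ S ∧ s(a, b) ∈ Eset E ∧ ω s(a, b) = true) x y

/-- The open cluster of `x`. -/
def cluster (E : Fin N → Set (Sym2 V)) (ω : Config V) (x : V) : Set V :=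
  {y | ConnIn E ω Set.univ x y}

/-- The retention probability of an edge `e` under the parameter vector `r`:
`r i` for an edge of colour `i`, `0` for non-edges (by disjointness at most one
summand is nonzero). -/
noncomputable def edgeProb (E : Fin N → Set (Sym2 V)) (r : Fin N → ℝ) (e : Sym2 V) : ℝ :=
  ∑ i : Fin N, if e ∈ E i then r i else 0

/-- `P` is the family of inhomogeneous percolation (product) measures: for each valid
parameter vector `r` it is a probability measure whose cylinder probabilities are the
products of the individual edge-retention probabilities. -/
def IsPercFamily (E : Fin N → Set (Sym2 V)) (P : (Fin N → ℝ) → Measure (Config V)) : Prop :=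
  ∀ r : Fin N → ℝ, (∀ i, r i ∈ Icc (0 : ℝ) 1) →
    IsProbabilityMeasure (P r) ∧
    ∀ (F : Finset (Sym2 V)) (σ : Sym2 V → Bool),
      P r {ω | ∀ e ∈ F, ω e = σ e} =
        ∏ e ∈ F, ENNReal.ofReal (if σ e then edgeProb E r e else 1 - edgeProb E r e)

/-- The full parameter vector `(p₁, …, p_{N-1}, q)`. -/
noncomputable def pFull (N : ℕ) (p : Fin (N - 1) → ℝ) (q : ℝ) : Fin N → ℝ :=
  fun i => if h : (i : ℕ) < N - 1 then p ⟨i, h⟩ else q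

/-- The percolation function `θ`. -/
noncomputable def theta (E : Fin N → Set (Sym2 V)) (P : (Fin N → ℝ) → Measure (Config V))
    (r : Fin N → ℝ) : ℝ≥0∞ :=
  ⨆ x : V, P r {ω | (cluster E ω x).Infinite}

/-- The susceptibility `χ`. -/
noncomputable def chi (E : Fin N → Set (Sym2 V)) (P : (Fin N → ℝ) → Measure (Config V))
    (r : Fin N → ℝ) : ℝ≥0∞ :=
  ⨆ x : V, ∫⁻ ω, ((cluster E ω x).encard : ℝ≥0∞) ∂(P r)

/-- The `θ`-critical surface. -/
noncomputable def qTheta (E : Fin N → Set (Sym2 V)) (P : (Fin N → ℝ) → Measure (Config V))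
    (p : Fin (N - 1) → ℝ) : ℝ :=
  sInf (insert (1 : ℝ) {q | q ∈ Icc (0 : ℝ) 1 ∧ 0 < theta E P (pFull N p q)})

/-- The `χ`-critical surface. -/
noncomputable def qChi (E : Fin N → Set (Sym2 V)) (P : (Fin N → ℝ) → Measure (Config V))
    (p : Fin (N - 1) → ℝ) : ℝ :=
  sInf (insert (1 : ℝ) {q | q ∈ Icc (0 : ℝ) 1 ∧ chi E P (pFull N p q) = ⊤})

/-- `ψ_{p,q}(x,S) = Σᵢ pᵢ Σ_{{y,z} ∈ ΔS ∩ Eᵢ} P(x ↔_S y)` (each boundary edge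
is enumerated by its unique orientation `y ∈ S`, `z ∉ S`). -/
noncomputable def psi (E : Fin N → Set (Sym2 V)) (P : (Fin N → ℝ) → Measure (Config V))
    (r : Fin N → ℝ) (x : V) (S : Finset V) : ℝ≥0∞ :=
  ∑ i : Fin N, ENNReal.ofReal (r i) *
    ∑ y ∈ S, ∑' z : V,
      (if z ∉ S ∧ s(y, z) ∈ E i then P r {ω | ConnIn E ω ↑S x y} else 0)

/-- The `ψ`-critical surface. -/
noncomputable def qPsi (E : Fin N → Set (Sym2 V)) (P : (Fin N → ℝ) → Measure (Config V))
    (p : Fin (N - 1) → ℝ) : ℝ :=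
  sSup {q | q ∈ Icc (0 : ℝ) 1 ∧
    ∀ x : V, ∃ S : Finset V, x ∈ S ∧ psi E P (pFull N p q) x S < 1}

/-- The event that `x` is joined by an open path to `∂Λ_k^x` (the set of vertices
at graph distance exactly `k` from `x`). -/
def ConnSphere (E : Fin N → Set (Sym2 V)) (ω : Config V) (x : V) (k : ℕ) : Prop :=
  ∃ y : V, dist E x y = k ∧ ConnIn E ω Set.univ x y

/-!
A connection probability `P(x ↔_S y)` inside a finite set `S` depends on finitely many edges,
so it is a polynomial in the edge probabilities, nondecreasing in each of them because the
connection event is increasing. Hence `ψ` is nondecreasing and `q_ψ` nonincreasing in `p`.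
Composed with the projection onto the cube, `q_ψ` becomes antitone on all of `ℝ^{N-1}`. A real
function is continuous off the frontiers of its rational superlevel sets; for an antitone
function these are lower sets, whose frontiers are Lebesgue null. Off the null hyperplanes
`pᵢ = 0`, continuity of the extension at `p` gives left-continuity of `λ ↦ q_ψ(p + λ𝟙)` at `0`.
-/

section Bernoulli

variable {ι : Type*}

/-- The probability that the set of open edges among `F` satisfies `A`, when each `e ∈ F` is
open independently with probability `π e`. -/
noncomputable def bernoulliWeight (F : Finset ι) (π : ι → ℝ) (A : Finset ι → Prop) : ℝ :=
  ∑ K ∈ F.powerset with A K, ∏ e ∈ F, if e ∈ K then π e else 1 - π e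

lemma bernoulli_factor_nonneg {p : ℝ} (hp : p ∈ Icc (0 : ℝ) 1) (b : Prop) [Decidable b] :
    0 ≤ if b then p else 1 - p := by
  split_ifs <;> linarith [hp.1, hp.2]

lemma prod_bernoulli_nonneg {F : Finset ι} {π : ι → ℝ} (hπ : ∀ e ∈ F, π e ∈ Icc (0 : ℝ) 1)
    (K : Finset ι) : 0 ≤ ∏ e ∈ F, if e ∈ K then π e else 1 - π e :=
  Finset.prod_nonneg fun e he => bernoulli_factor_nonneg (hπ e he) _

lemma bernoulliWeight_le_of_imp {F : Finset ι} {π : ι → ℝ} (hπ : ∀ e ∈ F, π e ∈ Icc (0 : ℝ) 1)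
    {A B : Finset ι → Prop} (hAB : ∀ K, A K → B K) :
    bernoulliWeight F π A ≤ bernoulliWeight F π B :=
  Finset.sum_le_sum_of_subset_of_nonneg (Finset.monotone_filter_right _ fun K _ => hAB K)
    fun K _ _ => prod_bernoulli_nonneg hπ K

lemma bernoulliWeight_insert {F : Finset ι} {a : ι} (ha : a ∉ F) (π : ι → ℝ)
    (A : Finset ι → Prop) :
    bernoulliWeight (insert a F) π A =
      (1 - π a) * bernoulliWeight F π A + π a * bernoulliWeight F π (fun K => A (insert a K)) := by
  simp only [bernoulliWeight, Finset.sum_filter, Finset.sum_powerset_insert ha, Finset.mul_sum]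
  congr 1 <;> refine Finset.sum_congr rfl fun K hK => ?_
  · have haK : a ∉ K := fun h => ha (Finset.mem_powerset.1 hK h)
    split_ifs <;> simp [Finset.prod_insert ha, haK]
  · split_ifs
    · rw [Finset.prod_insert ha, if_pos (Finset.mem_insert_self a K)]
      congr 1
      refine Finset.prod_congr rfl fun e he => ?_
      have hea : e ≠ a := ne_of_mem_of_not_mem he ha
      simp [hea]
    · simp

lemma bernoulliWeight_mono {π π' : ι → ℝ} {A : Finset ι → Prop} (hA : Monotone A)
    {F : Finset ι} (h0 : ∀ e ∈ F, 0 ≤ π e) (hle : ∀ e ∈ F, π e ≤ π' e) (h1 : ∀ e ∈ F, π' e ≤ 1) :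
    bernoulliWeight F π A ≤ bernoulliWeight F π' A := by
  induction F using Finset.induction_on generalizing A with
  | empty => simp [bernoulliWeight]
  | insert a F ha ih =>
    simp only [Finset.forall_mem_insert] at h0 hle h1
    have hπ' : ∀ e ∈ F, π' e ∈ Icc (0 : ℝ) 1 := fun e he =>
      ⟨(h0.2 e he).trans (hle.2 e he), h1.2 e he⟩
    have hAa : Monotone fun K => A (insert a K) := fun _ _ h =>
      hA (Finset.insert_subset_insert a h)
    have hW := ih hA h0.2 hle.2 h1.2
    have hWa := ih hAa h0.2 hle.2 h1.2
    have hWWa : bernoulliWeight F π' A ≤ bernoulliWeight F π' fun K => A (insert a K) :=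
      bernoulliWeight_le_of_imp hπ' fun K => hA (Finset.subset_insert a K)
    rw [bernoulliWeight_insert ha, bernoulliWeight_insert ha]
    set w := bernoulliWeight F π A
    set wa := bernoulliWeight F π fun K => A (insert a K)
    set w' := bernoulliWeight F π' A
    set wa' := bernoulliWeight F π' fun K => A (insert a K)
    calc (1 - π a) * w + π a * wa ≤ (1 - π a) * w' + π a * wa' := by gcongr <;> linarith
      _ = w' + π a * (wa' - w') := by ring
      _ ≤ w' + π' a * (wa' - w') := by gcongr; linarith
      _ = (1 - π' a) * w' + π' a * wa' := by ring

lemma filter_eq_iff_forall_eq_decide {F K : Finset ι} (hK : K ⊆ F) (ω : ι → Bool) :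
    F.filter (fun e => ω e) = K ↔ ∀ e ∈ F, ω e = decide (e ∈ K) := by
  constructor
  · rintro rfl e he
    by_cases h : ω e <;> simp [he, h]
  · intro h
    ext e
    by_cases he : e ∈ F
    · simp [he, h e he]
    · simpa [he] using fun h => he (hK h)

lemma measurableSet_cylinder (F : Finset ι) (σ : ι → Bool) :
    MeasurableSet {ω : ι → Bool | ∀ e ∈ F, ω e = σ e} := by
  simp only [Set.ofPred_forall]
  exact .biInter F.countable_toSet fun e _ =>
    measurableSet_eq_fun (measurable_pi_apply e) measurable_const

lemma measure_filter_eq_bernoulliWeight {μ : Measure (ι → Bool)} {F : Finset ι} {π : ι → ℝ}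
    (hπ : ∀ e ∈ F, π e ∈ Icc (0 : ℝ) 1)
    (hμ : ∀ σ : ι → Bool, μ {ω | ∀ e ∈ F, ω e = σ e} =
      ∏ e ∈ F, ENNReal.ofReal (if σ e then π e else 1 - π e))
    (A : Finset ι → Prop) :
    μ {ω | A (F.filter fun e => ω e)} = ENNReal.ofReal (bernoulliWeight F π A) := by
  set openIn : (ι → Bool) → Finset ι := fun ω => F.filter fun e => ω e
  have hfiber : ∀ K ∈ F.powerset, openIn ⁻¹' {K} = {ω | ∀ e ∈ F, ω e = decide (e ∈ K)} :=
    fun K hK => Set.ext fun ω => filter_eq_iff_forall_eq_decide (Finset.mem_powerset.1 hK) ω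
  have hevent : {ω | A (openIn ω)} = openIn ⁻¹' ↑(F.powerset.filter A) := by
    ext ω
    simp [openIn]
  rw [hevent, ← sum_measure_preimage_singleton _ fun K hK => ?_]
  · rw [bernoulliWeight, ENNReal.ofReal_sum_of_nonneg fun K _ => prod_bernoulli_nonneg hπ K]
    refine Finset.sum_congr rfl fun K hK => ?_
    rw [hfiber K (Finset.mem_filter.1 hK).1, hμ]
    simp only [decide_eq_true_eq]
    exact (ENNReal.ofReal_prod_of_nonneg fun e he => bernoulli_factor_nonneg (hπ e he) _).symm
  · rw [hfiber K (Finset.mem_filter.1 hK).1]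
    exact measurableSet_cylinder F _

end Bernoulli

lemma continuousAt_of_forall_notMem_frontier {X : Type*} [TopologicalSpace X] {f : X → ℝ} {x : X}
    (h : ∀ c : ℚ, x ∉ frontier {y | (c : ℝ) < f y}) : ContinuousAt f x := by
  refine tendsto_order.2 ⟨fun a ha => ?_, fun b hb => ?_⟩
  · obtain ⟨c, hac, hcx⟩ := exists_rat_btwn ha
    have hint : x ∈ interior {y | (c : ℝ) < f y} := by
      by_contra hx
      exact h c ⟨subset_closure hcx, hx⟩
    filter_upwards [mem_interior_iff_mem_nhds.1 hint] with y hy using hac.trans hy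
  · obtain ⟨c, hxc, hcb⟩ := exists_rat_btwn hb
    have hcl : x ∉ closure {y | (c : ℝ) < f y} := fun hx =>
      h c ⟨hx, fun hi => hxc.not_gt (interior_subset (s := {y | (c : ℝ) < f y}) hi)⟩
    filter_upwards [isClosed_closure.isOpen_compl.mem_nhds hcl] with y hy
    exact (not_lt.1 fun hcy => hy (subset_closure hcy)).trans_lt hcb

theorem _root_.Antitone.ae_continuousAt {ι : Type*} [Fintype ι] {f : (ι → ℝ) → ℝ}
    (hf : Antitone f) : ∀ᵐ x, ContinuousAt f x := by
  have hnull : volume (⋃ c : ℚ, frontier {y | (c : ℝ) < f y}) = 0 :=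
    measure_iUnion_null fun c => IsLowerSet.null_frontier fun _ _ hba ha => ha.trans_le (hf hba)
  refine ae_iff.2 (measure_mono_null (fun x hx => ?_) hnull)
  by_contra hx'
  simp only [mem_iUnion, not_exists] at hx'
  exact hx (continuousAt_of_forall_notMem_frontier hx')

section Monotonicity

variable {E : Fin N → Set (Sym2 V)} {P : (Fin N → ℝ) → Measure (Config V)} {r r' : Fin N → ℝ}

lemma edgeProb_mem_Icc (hdisj : DisjointColours E) (hr : ∀ i, r i ∈ Icc (0 : ℝ) 1)
    (e : Sym2 V) : edgeProb E r e ∈ Icc (0 : ℝ) 1 := by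
  refine ⟨Finset.sum_nonneg fun i _ => by split_ifs <;> simp [(hr i).1], ?_⟩
  by_cases he : ∃ i, e ∈ E i
  · obtain ⟨i, hi⟩ := he
    rw [edgeProb, Finset.sum_eq_single i
      (fun j _ hji => if_neg fun hj => Set.disjoint_left.mp (hdisj j i hji) hj hi)
      (fun h => absurd (Finset.mem_univ i) h), if_pos hi]
    exact (hr i).2
  · push Not at he
    simp [edgeProb, he]

lemma edgeProb_mono (hle : r ≤ r') (e : Sym2 V) : edgeProb E r e ≤ edgeProb E r' e :=
  Finset.sum_le_sum fun i _ => by split_ifs <;> simp [hle i]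

lemma IsPercFamily.measure_mono (hdisj : DisjointColours E) (hP : IsPercFamily E P)
    (hr : ∀ i, r i ∈ Icc (0 : ℝ) 1) (hr' : ∀ i, r' i ∈ Icc (0 : ℝ) 1) (hle : r ≤ r')
    (F : Finset (Sym2 V)) {A : Finset (Sym2 V) → Prop} (hA : Monotone A) :
    P r {ω | A (F.filter fun e => ω e)} ≤ P r' {ω | A (F.filter fun e => ω e)} := by
  rw [measure_filter_eq_bernoulliWeight (fun e _ => edgeProb_mem_Icc hdisj hr e) ((hP r hr).2 F),
    measure_filter_eq_bernoulliWeight (fun e _ => edgeProb_mem_Icc hdisj hr' e) ((hP r' hr').2 F)]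
  exact ENNReal.ofReal_le_ofReal <| bernoulliWeight_mono hA
    (fun e _ => (edgeProb_mem_Icc hdisj hr e).1) (fun e _ => edgeProb_mono hle e)
    (fun e _ => (edgeProb_mem_Icc hdisj hr' e).2)

noncomputable def edgesIn (E : Fin N → Set (Sym2 V)) (S : Finset V) : Finset (Sym2 V) :=
  S.sym2.filter (· ∈ Eset E)

lemma connIn_iff_edgesIn (ω : Config V) (S : Finset V) (x y : V) :
    ConnIn E ω S x y ↔
      ConnIn E (fun e => decide (e ∈ (edgesIn E S).filter fun e => ω e)) S x y := by
  unfold ConnIn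
  congr! 3 with a b
  simp only [Finset.mem_coe, edgesIn, Finset.mem_filter, Finset.mk_mem_sym2_iff, decide_eq_true_eq]
  tauto

lemma monotone_connIn_decide (S : Set V) (x y : V) :
    Monotone fun K : Finset (Sym2 V) => ConnIn E (fun e => decide (e ∈ K)) S x y := by
  intro K K' hK h
  refine Relation.ReflTransGen.mono ?_ _ _ h
  rintro a b ⟨ha, hb, he, hω⟩
  exact ⟨ha, hb, he, by simpa using hK (by simpa using hω)⟩

lemma measure_connIn_mono (hdisj : DisjointColours E) (hP : IsPercFamily E P)
    (hr : ∀ i, r i ∈ Icc (0 : ℝ) 1) (hr' : ∀ i, r' i ∈ Icc (0 : ℝ) 1) (hle : r ≤ r')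
    (S : Finset V) (x y : V) :
    P r {ω | ConnIn E ω S x y} ≤ P r' {ω | ConnIn E ω S x y} := by
  rw [show {ω | ConnIn E ω S x y} = _ from Set.ext fun ω => connIn_iff_edgesIn ω S x y]
  exact hP.measure_mono hdisj hr hr' hle _ (monotone_connIn_decide _ x y)

lemma psi_mono (hdisj : DisjointColours E) (hP : IsPercFamily E P)
    (hr : ∀ i, r i ∈ Icc (0 : ℝ) 1) (hr' : ∀ i, r' i ∈ Icc (0 : ℝ) 1) (hle : r ≤ r')
    (x : V) (S : Finset V) : psi E P r x S ≤ psi E P r' x S := by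
  unfold psi
  gcongr with i _ y _ z
  · exact hle i
  · split_ifs
    · exact measure_connIn_mono hdisj hP hr hr' hle S x y
    · rfl

end Monotonicity

section CriticalSurface

variable {E : Fin N → Set (Sym2 V)} {P : (Fin N → ℝ) → Measure (Config V)}

lemma pFull_mem_Icc {p : Fin (N - 1) → ℝ} {q : ℝ} (hp : ∀ i, p i ∈ Icc (0 : ℝ) 1)
    (hq : q ∈ Icc (0 : ℝ) 1) (i : Fin N) : pFull N p q i ∈ Icc (0 : ℝ) 1 := by
  unfold pFull
  split_ifs
  exacts [hp _, hq]

lemma pFull_mono {p p' : Fin (N - 1) → ℝ} (hle : p ≤ p') (q : ℝ) : pFull N p q ≤ pFull N p' q :=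
  fun i => by
    unfold pFull
    split_ifs
    exacts [hle _, le_rfl]

lemma qPsi_anti (hdisj : DisjointColours E) (hP : IsPercFamily E P) {p p' : Fin (N - 1) → ℝ}
    (hp : ∀ i, p i ∈ Icc (0 : ℝ) 1) (hp' : ∀ i, p' i ∈ Icc (0 : ℝ) 1) (hle : p ≤ p') :
    qPsi E P p' ≤ qPsi E P p := by
  refine Real.sSup_le (fun q ⟨hq, h⟩ => le_csSup ⟨1, fun q hq => hq.1.2⟩ ⟨hq, fun x => ?_⟩)
    (Real.sSup_nonneg fun q hq => hq.1.1)
  obtain ⟨S, hxS, hlt⟩ := h x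
  exact ⟨S, hxS, (psi_mono hdisj hP (pFull_mem_Icc hp hq) (pFull_mem_Icc hp' hq)
    (pFull_mono hle q) x S).trans_lt hlt⟩

noncomputable def clampedQPsi (E : Fin N → Set (Sym2 V)) (P : (Fin N → ℝ) → Measure (Config V))
    (u : Fin (N - 1) → ℝ) : ℝ :=
  qPsi E P fun i => projIcc 0 1 zero_le_one (u i)

lemma clampedQPsi_antitone (hdisj : DisjointColours E) (hP : IsPercFamily E P) :
    Antitone (clampedQPsi E P) := fun _ _ h =>
  qPsi_anti hdisj hP (fun _ => Subtype.prop _) (fun _ => Subtype.prop _)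
    fun i => monotone_projIcc zero_le_one (h i)

lemma clampedQPsi_eq {u : Fin (N - 1) → ℝ} (hu : ∀ i, u i ∈ Icc (0 : ℝ) 1) :
    clampedQPsi E P u = qPsi E P u := by
  simp [clampedQPsi, projIcc_of_mem _ (hu _)]

open Filter Topology in
lemma continuousWithinAt_qPsi_diag {p : Fin (N - 1) → ℝ} (hp : ∀ i, p i ∈ Icc (0 : ℝ) 1)
    (hp0 : ∀ i, p i ≠ 0) (hcont : ContinuousAt (clampedQPsi E P) p) :
    ContinuousWithinAt (fun lam : ℝ => qPsi E P fun i => p i + lam) (Iic 0) 0 := by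
  have hline : ContinuousAt (fun lam : ℝ => clampedQPsi E P fun i => p i + lam) 0 :=
    hcont.comp_of_eq (by fun_prop) (by simp)
  have hpos : ∀ᶠ lam in 𝓝 (0 : ℝ), ∀ i, 0 < p i + lam := eventually_all.2 fun i =>
    ((continuous_const_add (p i)).tendsto' 0 (p i) (add_zero _)).eventually_const_lt
      ((hp i).1.lt_of_ne (hp0 i).symm)
  refine hline.continuousWithinAt.congr_of_eventuallyEq ?_
    (clampedQPsi_eq (by simpa using hp)).symm
  filter_upwards [nhdsWithin_le_nhds hpos, self_mem_nhdsWithin] with lam hlam hle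
  exact (clampedQPsi_eq fun i =>
    ⟨(hlam i).le, by linarith [(hp i).2, show lam ≤ 0 from hle]⟩).symm

end CriticalSurface

theorem discontinuity_set_null_general
    {V : Type*} {N : ℕ}
    (E : Fin N → Set (Sym2 V))
    (hdisj : DisjointColours E)
    (P : (Fin N → ℝ) → Measure (Config V)) (hP : IsPercFamily E P) :
    (volume : Measure (Fin (N - 1) → ℝ))
      {p : Fin (N - 1) → ℝ | (∀ i, p i ∈ Icc (0 : ℝ) 1) ∧
        ¬ ContinuousWithinAt (fun lam : ℝ => qPsi E P (fun i => p i + lam)) (Iic 0) 0} = 0 := by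
  have hcont : ∀ᵐ p, ContinuousAt (clampedQPsi E P) p :=
    (clampedQPsi_antitone hdisj hP).ae_continuousAt
  have hoff : ∀ᵐ p : Fin (N - 1) → ℝ, ∀ i, p i ≠ 0 :=
    ae_all_iff.2 fun i => by rw [volume_pi]; exact Measure.ae_eval_ne _ i 0
  refine measure_mono_null ?_ (ae_iff.1 (hcont.and hoff))
  rintro p ⟨hp, hdisc⟩ ⟨hc, hp0⟩
  exact hdisc (continuousWithinAt_qPsi_diag hp hp0 hc)

/-- the set `𝒜ᶜ` of `p ∈ [0,1]^{N-1}` at which `λ ↦ q_ψ(p + λ𝟙)` is not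
left-continuous at `0` has Lebesgue measure zero. -/
theorem discontinuity_set_null
    {V : Type*} [Countable V] [Infinite V] {N : ℕ} (hN : 0 < N)
    (E : Fin N → Set (Sym2 V))
    (hdisj : DisjointColours E) (hloops : NoLoops E)
    (hlf : LocFin E) (hconn : ConnectedGraph E) (hqt : QuasiTransitive E)
    (P : (Fin N → ℝ) → Measure (Config V)) (hP : IsPercFamily E P) :
    (volume : Measure (Fin (N - 1) → ℝ))
      {p : Fin (N - 1) → ℝ | (∀ i, p i ∈ Icc (0 : ℝ) 1) ∧
        ¬ ContinuousWithinAt (fun lam : ℝ => qPsi E P (fun i => p i + lam)) (Iic 0) 0} = 0 :=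
  discontinuity_set_null_general E hdisj P hP

end InhomPerc
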